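/- arXiv:2003.09918 — 2 statements merged into one kernel-verified Lean document; each statement's English description precedes it below -/
import Mathlib

section
/- For all natural numbers a ≥ b, all ptSTL formulas φ₁ and φ₂, every signal (x,u) and every time k with k ≥ a: ((x,u),k) ⊨ φ₁ S_{[a,b]} φ₂ if and only if there exists n with b ≤ n ≤ a such that ((x,u),k) ⊨ Xⁿφ₂ and ((x,u),k) ⊨ G⁻_{[n,b]} φ₁. In other words, the bounded since operator is expressible via X and G⁻: φ₁ S_{[a,b]} φ₂ is semantically equivalent at times k ≥ a to the finite disjunction ⋁_{n=b}^{a} (Xⁿφ₂ ∧ G⁻_{[n,b]} φ₁). -/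
/-- ptSTL formulas over `n` state variables and `m` control variables. -/
inductive ptSTL (n m : ℕ) : Type
  | top : ptSTL n m
  | gt (i : Fin n) (c : ℝ) : ptSTL n m
  | lt (i : Fin n) (c : ℝ) : ptSTL n m
  | ctrl (j : Fin m) (c : ℝ) : ptSTL n m
  | not (φ : ptSTL n m) : ptSTL n m
  | and (φ₁ φ₂ : ptSTL n m) : ptSTL n m
  | or (φ₁ φ₂ : ptSTL n m) : ptSTL n m
  | since (a b : ℕ) (φ₁ φ₂ : ptSTL n m) : ptSTL n m
  | F (a b : ℕ) (φ : ptSTL n m) : ptSTL n m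
  | G (a b : ℕ) (φ : ptSTL n m) : ptSTL n m
  | X (φ : ptSTL n m) : ptSTL n m

/-- Satisfaction of a ptSTL formula by a signal `(x, u)` at time `k`
(natural subtraction truncates the windows at time 0). -/
def Sat {n m : ℕ} (x : ℕ → Fin n → ℝ) (u : ℕ → Fin m → ℝ) : ℕ → ptSTL n m → Prop
  | _, .top => True
  | k, .gt i c => x k i > c
  | k, .lt i c => x k i < c
  | k, .ctrl j c => u k j = c
  | k, .not φ => ¬ Sat x u k φ
  | k, .and φ₁ φ₂ => Sat x u k φ₁ ∧ Sat x u k φ₂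
  | k, .or φ₁ φ₂ => Sat x u k φ₁ ∨ Sat x u k φ₂
  | k, .since a b φ₁ φ₂ => ∃ t, k - a ≤ t ∧ t ≤ k - b ∧ Sat x u t φ₂ ∧
      ∀ s, t ≤ s → s ≤ k - b → Sat x u s φ₁
  | k, .F a b φ => ∃ t, k - a ≤ t ∧ t ≤ k - b ∧ Sat x u t φ
  | k, .G a b φ => ∀ t, k - a ≤ t → t ≤ k - b → Sat x u t φ
  | k, .X φ => 1 ≤ k ∧ Sat x u (k - 1) φ

/-- `Xpow N φ` is the `N`-fold previous-step operator applied to `φ`. -/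
def Xpow {n m : ℕ} : ℕ → ptSTL n m → ptSTL n m
  | 0, φ => φ
  | N + 1, φ => .X (Xpow N φ)

/-- A trace of the system `x_{k+1} = f(x_k, u_k, w_k)` with control set `U` and
disturbance set `W`. -/
def IsTrace {n m l : ℕ} (f : (Fin n → ℝ) → (Fin m → ℝ) → (Fin l → ℝ) → (Fin n → ℝ))
    (W : Set (Fin l → ℝ)) (U : Set (Fin m → ℝ))
    (x : ℕ → Fin n → ℝ) (u : ℕ → Fin m → ℝ) : Prop :=
  (∀ k, u k ∈ U) ∧ ∀ k, ∃ w ∈ W, x (k + 1) = f (x k) (u k) w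

/-- A formula `Φ` is controllable for the system: at every time `k` there is a control
sequence (with values in `U` on `0,…,k`) such that every trace agreeing with it on
`0,…,k` violates `Φ` at time `k`. -/
def Controllable {n m l : ℕ} (f : (Fin n → ℝ) → (Fin m → ℝ) → (Fin l → ℝ) → (Fin n → ℝ))
    (W : Set (Fin l → ℝ)) (U : Set (Fin m → ℝ)) (Φ : ptSTL n m) : Prop :=
  ∀ k : ℕ, ∃ v : ℕ → Fin m → ℝ, (∀ t ≤ k, v t ∈ U) ∧
    ∀ x u, IsTrace f W U x u → (∀ t ≤ k, u t = v t) → ¬ Sat x u k Φ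

theorem sat_Xpow_iff {n m : ℕ} (x : ℕ → Fin n → ℝ) (u : ℕ → Fin m → ℝ) (φ : ptSTL n m)
    (N k : ℕ) : Sat x u k (Xpow N φ) ↔ N ≤ k ∧ Sat x u (k - N) φ := by
  induction N generalizing k with
  | zero => simp [Xpow]
  | succ N ih =>
    rw [Xpow, Sat, ih, Nat.sub_sub, Nat.add_comm 1 N, ← and_assoc]
    exact and_congr_left fun _ => by omega

theorem exists_mem_window_iff_exists_lag {a b k : ℕ} (hbk : b ≤ k) (P : ℕ → Prop) :
    (∃ t, k - a ≤ t ∧ t ≤ k - b ∧ P t) ↔ ∃ N, b ≤ N ∧ N ≤ a ∧ P (k - N) := by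
  constructor
  · rintro ⟨t, hat, htb, ht⟩
    exact ⟨k - t, by omega, by omega, by rwa [Nat.sub_sub_self (by omega)]⟩
  · rintro ⟨N, hbN, hNa, hN⟩
    exact ⟨k - N, by omega, by omega, hN⟩

/-- at times `k ≥ a`, `φ₁ S_{[a,b]} φ₂` holds iff there is `N` with
`b ≤ N ≤ a` such that `X^N φ₂` and `G⁻_{[N,b]} φ₁` hold. -/
theorem since_eq_disj_Xpow_G {n m : ℕ} (a b : ℕ) (hab : b ≤ a) (φ₁ φ₂ : ptSTL n m)
    (x : ℕ → Fin n → ℝ) (u : ℕ → Fin m → ℝ) (k : ℕ) (hk : a ≤ k) :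
    Sat x u k (.since a b φ₁ φ₂) ↔
      ∃ N, b ≤ N ∧ N ≤ a ∧ Sat x u k (Xpow N φ₂) ∧ Sat x u k (.G N b φ₁) := by
  rw [Sat, exists_mem_window_iff_exists_lag (hab.trans hk)]
  refine exists_congr fun N => and_congr_right fun _ => and_congr_right fun hNa => ?_
  rw [sat_Xpow_iff, Sat]
  simp only [show N ≤ k by omega, true_and]
end

section
/- Every ptSTL formula φ admits a conjunctive normal form over shifted atoms: there exist a natural number h, a positive integer z, and formulas φ₁,…,φ_z, each of which is a nonempty finite disjunction of formulas of the form Xⁿα or Xⁿ¬α where α is an atomic formula (⊤, x^i > c, x^i < c, or u^j = c), such that for every signal (x,u) and every time k ≥ h: ((x,u),k) ⊨ φ if and only if ((x,u),k) ⊨ φ₁ ∧ … ∧ φ_z. -/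
/-- An atomic formula: `⊤`, `x^i > c`, `x^i < c`, or `u^j = c`. -/
def IsAtomicFormula {n m : ℕ} (φ : ptSTL n m) : Prop :=
  φ = .top ∨ (∃ i c, φ = .gt i c) ∨ (∃ i c, φ = .lt i c) ∨ (∃ j c, φ = .ctrl j c)

/-- A shifted literal: `Xⁿα` or `Xⁿ¬α` for an atomic formula `α`. -/
def IsLiteral {n m : ℕ} (φ : ptSTL n m) : Prop :=
  ∃ (N : ℕ) (α : ptSTL n m), IsAtomicFormula α ∧ (φ = Xpow N α ∨ φ = Xpow N (.not α))

/-- A clause: a nonempty finite disjunction of shifted literals. -/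
inductive IsClause {n m : ℕ} : ptSTL n m → Prop
  | lit {φ} : IsLiteral φ → IsClause φ
  | or {φ₁ φ₂} : IsClause φ₁ → IsClause φ₂ → IsClause (.or φ₁ φ₂)

/-- A CNF formula: a nonempty finite conjunction `φ₁ ∧ … ∧ φ_z` of clauses. -/
inductive IsCNF {n m : ℕ} : ptSTL n m → Prop
  | clause {φ} : IsClause φ → IsCNF φ
  | and {φ₁ φ₂} : IsCNF φ₁ → IsCNF φ₂ → IsCNF (.and φ₁ φ₂)

/-!
Away from time `0` the windows of `S`, `F⁻` and `G⁻` are not truncated, so each windowed operator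
unfolds into a finite Boolean combination of shifted formulas: `F⁻_{[a,b]} φ` becomes
`⋁_{b ≤ j ≤ a} Xʲ φ`, `G⁻_{[a,b]} φ` becomes `⋀_{b ≤ j ≤ a} Xʲ φ`, and `φ₁ S_{[a,b]} φ₂` becomes
`⋁_{b ≤ j ≤ a} (Xʲ φ₂ ∧ G⁻_{[j,b]} φ₁)`. What is left is built from atoms by `¬`, `∧`, `∨` and `X`.
At times `k ≥ 1` the operator `X` commutes with `¬`, `∧` and `∨`, so it can be pushed down to
the atoms, and the usual CNF conversion (carrying along a CNF of the negation) finishes the proof.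
Every step is an equivalence from some time on, which is all the theorem asks for.
-/

open Filter

namespace ptSTL

variable {n m : ℕ} {x : ℕ → Fin n → ℝ} {u : ℕ → Fin m → ℝ} {k a b : ℕ}

theorem sat_Xpow (N : ℕ) (φ : ptSTL n m) : Sat x u k (Xpow N φ) ↔ N ≤ k ∧ Sat x u (k - N) φ := by
  induction N generalizing k with
  | zero => simp [Xpow]
  | succ N ih =>
    simp only [Xpow, Sat, ih, Nat.sub_sub, Nat.add_comm 1 N, ← and_assoc]
    exact and_congr_left fun _ => by omega

def bigOr (l : List (ptSTL n m)) : ptSTL n m := l.foldr .or (.not .top)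

def bigAnd (l : List (ptSTL n m)) : ptSTL n m := l.foldr .and .top

theorem sat_bigOr (l : List (ptSTL n m)) : Sat x u k (bigOr l) ↔ ∃ φ ∈ l, Sat x u k φ := by
  induction l with
  | nil => simp [bigOr, Sat]
  | cons φ l ih => simp [bigOr, Sat, ← ih]

theorem sat_bigAnd (l : List (ptSTL n m)) : Sat x u k (bigAnd l) ↔ ∀ φ ∈ l, Sat x u k φ := by
  induction l with
  | nil => simp [bigAnd, Sat]
  | cons φ l ih => simp [bigAnd, Sat, ← ih]

-- Reindexing the window `[k - a, k - b]` of times `t` by the lags `j = k - t ∈ [b, a]`.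
theorem exists_lag_iff (hb : b ≤ k) (Q : ℕ → Prop) :
    (∃ j ∈ List.Ico b (a + 1), j ≤ k ∧ Q (k - j)) ↔ ∃ t, k - a ≤ t ∧ t ≤ k - b ∧ Q t := by
  simp only [List.Ico.mem]
  constructor
  · rintro ⟨j, hj, hjk, hQ⟩
    exact ⟨k - j, by omega, by omega, hQ⟩
  · rintro ⟨t, hat, htb, hQ⟩
    exact ⟨k - t, ⟨by omega, by omega⟩, by omega, by rwa [Nat.sub_sub_self (by omega)]⟩

theorem forall_lag_iff (hk : max a b ≤ k) (Q : ℕ → Prop) :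
    (∀ j ∈ List.Ico b (a + 1), j ≤ k ∧ Q (k - j)) ↔ ∀ t, k - a ≤ t → t ≤ k - b → Q t := by
  simp only [List.Ico.mem]
  constructor
  · intro h t hat htb
    have := (h (k - t) ⟨by omega, by omega⟩).2
    rwa [Nat.sub_sub_self (by omega)] at this
  · intro h j hj
    exact ⟨by omega, h _ (by omega) (by omega)⟩

variable {φ ψ : ptSTL n m}

def expandF (a b : ℕ) (φ : ptSTL n m) : ptSTL n m :=
  bigOr ((List.Ico b (a + 1)).map (Xpow · φ))

def expandG (a b : ℕ) (φ : ptSTL n m) : ptSTL n m :=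
  bigAnd ((List.Ico b (a + 1)).map (Xpow · φ))

def expandSince (a b : ℕ) (φ ψ : ptSTL n m) : ptSTL n m :=
  bigOr ((List.Ico b (a + 1)).map fun j => .and (Xpow j ψ) (expandG j b φ))

theorem sat_expandF (hb : b ≤ k) : Sat x u k (expandF a b φ) ↔ Sat x u k (.F a b φ) := by
  simp only [expandF, sat_bigOr, List.mem_map, exists_exists_and_eq_and, sat_Xpow]
  exact exists_lag_iff hb fun t => Sat x u t φ

theorem sat_expandG (hk : max a b ≤ k) : Sat x u k (expandG a b φ) ↔ Sat x u k (.G a b φ) := by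
  simp only [expandG, sat_bigAnd, List.forall_mem_map, sat_Xpow]
  exact forall_lag_iff hk fun t => Sat x u t φ

theorem sat_expandSince (hb : b ≤ k) :
    Sat x u k (expandSince a b φ ψ) ↔ Sat x u k (.since a b φ ψ) := by
  simp only [expandSince, sat_bigOr, List.mem_map, exists_exists_and_eq_and, Sat, sat_Xpow,
    and_assoc]
  refine Iff.trans (exists_congr fun j => and_congr_right fun _ => ?_)
    (exists_lag_iff hb fun t => Sat x u t ψ ∧ ∀ s, t ≤ s → s ≤ k - b → Sat x u s φ)
  exact and_congr_right fun hjk => and_congr_right' <| sat_expandG (max_le hjk hb)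

def expand : ptSTL n m → ptSTL n m
  | .top => .top
  | .gt i c => .gt i c
  | .lt i c => .lt i c
  | .ctrl j c => .ctrl j c
  | .not φ => .not (expand φ)
  | .and φ ψ => .and (expand φ) (expand ψ)
  | .or φ ψ => .or (expand φ) (expand ψ)
  | .since a b φ ψ => expandSince a b (expand φ) (expand ψ)
  | .F a b φ => expandF a b (expand φ)
  | .G a b φ => expandG a b (expand φ)
  | .X φ => .X (expand φ)

inductive IsWindowFree : ptSTL n m → Prop
  | atom {α : ptSTL n m} : IsAtomicFormula α → IsWindowFree α
  | not {φ : ptSTL n m} : IsWindowFree φ → IsWindowFree (.not φ)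
  | and {φ ψ : ptSTL n m} : IsWindowFree φ → IsWindowFree ψ → IsWindowFree (.and φ ψ)
  | or {φ ψ : ptSTL n m} : IsWindowFree φ → IsWindowFree ψ → IsWindowFree (.or φ ψ)
  | X {φ : ptSTL n m} : IsWindowFree φ → IsWindowFree (.X φ)

theorem isWindowFree_Xpow (N : ℕ) (h : IsWindowFree φ) : IsWindowFree (Xpow N φ) := by
  induction N with
  | zero => exact h
  | succ N ih => exact .X ih

theorem isWindowFree_bigOr {l : List (ptSTL n m)} (h : ∀ φ ∈ l, IsWindowFree φ) :
    IsWindowFree (bigOr l) := by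
  induction l with
  | nil => exact .not (.atom (.inl rfl))
  | cons φ l ih => exact .or (h φ (by simp)) (ih fun ψ hψ => h ψ (by simp [hψ]))

theorem isWindowFree_bigAnd {l : List (ptSTL n m)} (h : ∀ φ ∈ l, IsWindowFree φ) :
    IsWindowFree (bigAnd l) := by
  induction l with
  | nil => exact .atom (.inl rfl)
  | cons φ l ih => exact .and (h φ (by simp)) (ih fun ψ hψ => h ψ (by simp [hψ]))

theorem isWindowFree_expandG (h : IsWindowFree φ) : IsWindowFree (expandG a b φ) :=
  isWindowFree_bigAnd <| List.forall_mem_map.2 fun j _ => isWindowFree_Xpow j h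

theorem isWindowFree_expand (φ : ptSTL n m) : IsWindowFree (expand φ) := by
  induction φ with
  | top => exact .atom (.inl rfl)
  | gt i c => exact .atom (.inr (.inl ⟨i, c, rfl⟩))
  | lt i c => exact .atom (.inr (.inr (.inl ⟨i, c, rfl⟩)))
  | ctrl j c => exact .atom (.inr (.inr (.inr ⟨j, c, rfl⟩)))
  | not _ ih => exact .not ih
  | and _ _ ih₁ ih₂ => exact .and ih₁ ih₂
  | or _ _ ih₁ ih₂ => exact .or ih₁ ih₂
  | since a b _ _ ih₁ ih₂ =>
    exact isWindowFree_bigOr <| List.forall_mem_map.2 fun j _ =>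
      .and (isWindowFree_Xpow j ih₂) (isWindowFree_expandG ih₁)
  | F a b _ ih =>
    exact isWindowFree_bigOr <| List.forall_mem_map.2 fun j _ => isWindowFree_Xpow j ih
  | G a b _ ih => exact isWindowFree_expandG ih
  | X _ ih => exact .X ih

def EventuallyEquiv (φ ψ : ptSTL n m) : Prop :=
  ∀ᶠ k in atTop, ∀ x u, Sat x u k φ ↔ Sat x u k ψ

namespace EventuallyEquiv

variable {φ₁ φ₂ ψ₁ ψ₂ χ : ptSTL n m}

theorem of_forall (h : ∀ x u k, Sat x u k φ ↔ Sat x u k ψ) : EventuallyEquiv φ ψ :=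
  Eventually.of_forall fun k x u => h x u k

theorem of_le (N : ℕ) (h : ∀ x u k, N ≤ k → (Sat x u k φ ↔ Sat x u k ψ)) :
    EventuallyEquiv φ ψ :=
  eventually_atTop.2 ⟨N, fun k hk x u => h x u k hk⟩

theorem refl (φ : ptSTL n m) : EventuallyEquiv φ φ :=
  of_forall fun _ _ _ => Iff.rfl

theorem symm (h : EventuallyEquiv φ ψ) : EventuallyEquiv ψ φ :=
  Eventually.mono h fun _ hk x u => (hk x u).symm

theorem trans (h₁ : EventuallyEquiv φ ψ) (h₂ : EventuallyEquiv ψ χ) : EventuallyEquiv φ χ :=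
  Eventually.mono (h₁.and h₂) fun _ hk x u => (hk.1 x u).trans (hk.2 x u)

theorem not (h : EventuallyEquiv φ ψ) : EventuallyEquiv (.not φ) (.not ψ) :=
  Eventually.mono h fun _ hk x u => not_congr (hk x u)

theorem and (h₁ : EventuallyEquiv φ₁ ψ₁) (h₂ : EventuallyEquiv φ₂ ψ₂) :
    EventuallyEquiv (.and φ₁ φ₂) (.and ψ₁ ψ₂) :=
  Eventually.mono (Eventually.and h₁ h₂) fun _ hk x u => and_congr (hk.1 x u) (hk.2 x u)

theorem or (h₁ : EventuallyEquiv φ₁ ψ₁) (h₂ : EventuallyEquiv φ₂ ψ₂) :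
    EventuallyEquiv (.or φ₁ φ₂) (.or ψ₁ ψ₂) :=
  Eventually.mono (Eventually.and h₁ h₂) fun _ hk x u => or_congr (hk.1 x u) (hk.2 x u)

theorem X (h : EventuallyEquiv φ ψ) : EventuallyEquiv (.X φ) (.X ψ) :=
  Eventually.mono ((tendsto_sub_atTop_nat 1).eventually h) fun _ hk x u =>
    and_congr_right' (hk x u)

theorem F (h : EventuallyEquiv φ ψ) (a b : ℕ) : EventuallyEquiv (.F a b φ) (.F a b ψ) := by
  obtain ⟨N, hN⟩ := eventually_atTop.1 h
  exact of_le (N + a) fun x u k hk => exists_congr fun t =>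
    and_congr_right fun hat => and_congr_right' <| hN t (by omega) x u

theorem G (h : EventuallyEquiv φ ψ) (a b : ℕ) : EventuallyEquiv (.G a b φ) (.G a b ψ) := by
  obtain ⟨N, hN⟩ := eventually_atTop.1 h
  exact of_le (N + a) fun x u k hk => forall_congr' fun t =>
    imp_congr_right fun hat => imp_congr_right fun _ => hN t (by omega) x u

theorem since (h₁ : EventuallyEquiv φ₁ ψ₁) (h₂ : EventuallyEquiv φ₂ ψ₂) (a b : ℕ) :
    EventuallyEquiv (.since a b φ₁ φ₂) (.since a b ψ₁ ψ₂) := by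
  obtain ⟨N, hN⟩ := eventually_atTop.1 (Eventually.and h₁ h₂)
  exact of_le (N + a) fun x u k hk => exists_congr fun t =>
    and_congr_right fun hat => and_congr_right' <| and_congr ((hN t (by omega)).2 x u) <|
      forall_congr' fun s => imp_congr_right fun hts => imp_congr_right fun _ =>
        (hN s (by omega)).1 x u

end EventuallyEquiv

theorem expand_eventuallyEquiv (φ : ptSTL n m) : EventuallyEquiv (expand φ) φ := by
  induction φ with
  | top | gt | lt | ctrl => exact .refl _
  | not _ ih => exact ih.not
  | and _ _ ih₁ ih₂ => exact ih₁.and ih₂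
  | or _ _ ih₁ ih₂ => exact ih₁.or ih₂
  | since a b _ _ ih₁ ih₂ =>
    exact (EventuallyEquiv.of_le b fun _ _ _ => sat_expandSince).trans (ih₁.since ih₂ a b)
  | F a b _ ih => exact (EventuallyEquiv.of_le b fun _ _ _ => sat_expandF).trans (ih.F a b)
  | G a b _ ih =>
    exact (EventuallyEquiv.of_le (max a b) fun _ _ _ => sat_expandG).trans (ih.G a b)
  | X _ ih => exact ih.X

def prev : ptSTL n m → ptSTL n m
  | .and φ ψ => .and (prev φ) (prev ψ)
  | .or φ ψ => .or (prev φ) (prev ψ)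
  | φ => .X φ

theorem sat_prev (φ : ptSTL n m) : Sat x u k (prev φ) ↔ Sat x u k (.X φ) := by
  fun_induction prev φ with
  | case1 φ ψ ih₁ ih₂ => simp only [Sat, ih₁, ih₂]; tauto
  | case2 φ ψ ih₁ ih₂ => simp only [Sat, ih₁, ih₂]; tauto
  | case3 => exact Iff.rfl

theorem _root_.IsLiteral.X (h : IsLiteral φ) : IsLiteral (.X φ) := by
  obtain ⟨N, α, hα, rfl | rfl⟩ := h
  exacts [⟨N + 1, α, hα, .inl rfl⟩, ⟨N + 1, α, hα, .inr rfl⟩]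

theorem _root_.IsLiteral.prev_eq (h : IsLiteral φ) : prev φ = .X φ := by
  obtain ⟨_ | N, α, hα, rfl | rfl⟩ := h
  · rcases hα with rfl | ⟨_, _, rfl⟩ | ⟨_, _, rfl⟩ | ⟨_, _, rfl⟩ <;> rfl
  all_goals rfl

theorem _root_.IsClause.prev (h : IsClause φ) : IsClause (prev φ) := by
  induction h with
  | lit h => rw [h.prev_eq]; exact .lit h.X
  | or _ _ ih₁ ih₂ => exact .or ih₁ ih₂

theorem _root_.IsCNF.prev (h : IsCNF φ) : IsCNF (prev φ) := by
  induction h with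
  | clause h => exact .clause h.prev
  | and _ _ ih₁ ih₂ => exact .and ih₁ ih₂

theorem _root_.IsCNF.exists_or {c₁ c₂ : ptSTL n m} (h₁ : IsCNF c₁) (h₂ : IsCNF c₂) :
    ∃ c, IsCNF c ∧ ∀ x u k, Sat x u k c ↔ Sat x u k (.or c₁ c₂) := by
  induction h₁ generalizing c₂ with
  | clause hc₁ =>
    induction h₂ with
    | clause hc₂ => exact ⟨_, .clause (.or hc₁ hc₂), fun _ _ _ => Iff.rfl⟩
    | and _ _ ih₁ ih₂ =>
      obtain ⟨d₁, hd₁, e₁⟩ := ih₁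
      obtain ⟨d₂, hd₂, e₂⟩ := ih₂
      exact ⟨.and d₁ d₂, .and hd₁ hd₂, fun x u k =>
        (and_congr (e₁ x u k) (e₂ x u k)).trans or_and_left.symm⟩
  | and _ _ ih₁ ih₂ =>
    obtain ⟨d₁, hd₁, e₁⟩ := ih₁ h₂
    obtain ⟨d₂, hd₂, e₂⟩ := ih₂ h₂
    exact ⟨.and d₁ d₂, .and hd₁ hd₂, fun x u k =>
      (and_congr (e₁ x u k) (e₂ x u k)).trans and_or_right.symm⟩

theorem IsWindowFree.exists_cnf (h : IsWindowFree φ) :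
    ∃ c d, IsCNF c ∧ IsCNF d ∧ EventuallyEquiv c φ ∧ EventuallyEquiv d (.not φ) := by
  induction h with
  | @atom α hα =>
    exact ⟨α, .not α, .clause (.lit ⟨0, α, hα, .inl rfl⟩), .clause (.lit ⟨0, α, hα, .inr rfl⟩),
      .refl _, .refl _⟩
  | not _ ih =>
    obtain ⟨c, d, hc, hd, ec, ed⟩ := ih
    exact ⟨d, c, hd, hc, ed, ec.trans (.of_forall fun _ _ _ => not_not.symm)⟩
  | and _ _ ih₁ ih₂ =>
    obtain ⟨c₁, d₁, hc₁, hd₁, ec₁, ed₁⟩ := ih₁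
    obtain ⟨c₂, d₂, hc₂, hd₂, ec₂, ed₂⟩ := ih₂
    obtain ⟨d, hd, ed⟩ := hd₁.exists_or hd₂
    exact ⟨.and c₁ c₂, d, .and hc₁ hc₂, hd, ec₁.and ec₂,
      ((EventuallyEquiv.of_forall ed).trans (ed₁.or ed₂)).trans
        (.of_forall fun _ _ _ => not_and_or.symm)⟩
  | or _ _ ih₁ ih₂ =>
    obtain ⟨c₁, d₁, hc₁, hd₁, ec₁, ed₁⟩ := ih₁
    obtain ⟨c₂, d₂, hc₂, hd₂, ec₂, ed₂⟩ := ih₂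
    obtain ⟨c, hc, ec⟩ := hc₁.exists_or hc₂
    exact ⟨c, .and d₁ d₂, hc, .and hd₁ hd₂, (EventuallyEquiv.of_forall ec).trans (ec₁.or ec₂),
      (ed₁.and ed₂).trans (.of_forall fun _ _ _ => not_or.symm)⟩
  | X _ ih =>
    obtain ⟨c, d, hc, hd, ec, ed⟩ := ih
    have prev_equiv (ψ : ptSTL n m) : EventuallyEquiv (prev ψ) (.X ψ) :=
      .of_forall fun _ _ _ => sat_prev ψ
    have X_not (ψ : ptSTL n m) : EventuallyEquiv (.X (.not ψ)) (.not (.X ψ)) :=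
      .of_le 1 fun _ _ _ hk => by simp [Sat, hk]
    exact ⟨prev c, prev d, hc.prev, hd.prev, (prev_equiv c).trans ec.X,
      ((prev_equiv d).trans ed.X).trans (X_not _)⟩

end ptSTL

/-- every ptSTL formula is, at all times `k ≥ h` for some `h`,
equivalent to a conjunctive normal form over shifted atoms. -/
theorem exists_CNF {n m : ℕ} (φ : ptSTL n m) :
    ∃ (h : ℕ) (ψ : ptSTL n m), IsCNF ψ ∧
      ∀ (x : ℕ → Fin n → ℝ) (u : ℕ → Fin m → ℝ) (k : ℕ), h ≤ k →
        (Sat x u k φ ↔ Sat x u k ψ) := by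
  obtain ⟨ψ, -, hψ, -, hψφ, -⟩ := (ptSTL.isWindowFree_expand φ).exists_cnf
  obtain ⟨h, hh⟩ := eventually_atTop.1 ((ptSTL.expand_eventuallyEquiv φ).symm.trans hψφ.symm)
  exact ⟨h, ψ, hψ, fun x u k hk => hh k hk x u⟩
end
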